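/- Let R be an integral domain of characteristic zero with binomial closure R^bin and canonical injection ι : R → R^bin, and let S be a binomial ring. If φ : R → S is a ring homomorphism and ψ₁, ψ₂ : R^bin → S are ring homomorphisms with ψ₁ ∘ ι = φ = ψ₂ ∘ ι, then ψ₁ = ψ₂; that is, the extension of φ to the binomial closure is unique. -/

import Mathlib

/-!
The two extensions agree on `ι(R)`, and the subring of `R^bin` on which they agree is binomially
closed: if `ψ₁ x = ψ₂ x`, then `ψ₁` and `ψ₂` agree on `n! · C_x^n = x(x-1)⋯(x-n+1)`, and `n!` can
be cancelled in the characteristic-zero domain `S`. Minimality of `R^bin` forces this subring to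
be everything.
-/

/-- The multiplicative set of nonzero elements of the image of `ℤ` in `R`. -/
def intNonzero (R : Type*) [CommRing R] [IsDomain R] : Submonoid R where
  carrier := {r : R | (∃ m : ℤ, (m : R) = r) ∧ r ≠ 0}
  one_mem' := ⟨⟨1, by simp⟩, one_ne_zero⟩
  mul_mem' := by
    rintro a b ⟨⟨m, hm⟩, ha⟩ ⟨⟨k, hk⟩, hb⟩
    exact ⟨⟨m * k, by push_cast; rw [hm, hk]⟩, mul_ne_zero ha hb⟩

/-- The binomial coefficient `C_x^n = x (x-1) ⋯ (x-n+1) / n!` in a commutative ring `L`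
(where `n!` is invertible; `Ring.inverse` returns the inverse of a unit). -/
noncomputable def binom {L : Type*} [CommRing L] (x : L) (n : ℕ) : L :=
  (∏ i ∈ Finset.range n, (x - (i : L))) * Ring.inverse (n.factorial : L)

/-- A subring `B` of `L` is binomially closed if it contains all binomial
coefficients `C_x^n` for `x ∈ B`, `n : ℕ`. -/
def BinClosed {L : Type*} [CommRing L] (B : Subring L) : Prop :=
  ∀ x ∈ B, ∀ n : ℕ, binom x n ∈ B

/-- The binomial closure of `R`: the smallest binomially closed subring of the
localization `L` of `R` at the nonzero integers containing the image of `R`. -/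
noncomputable def binClosure (R : Type*) [CommRing R] [IsDomain R] [CharZero R] :
    Subring (Localization (intNonzero R)) :=
  sInf {B | BinClosed B ∧ (algebraMap R (Localization (intNonzero R))).range ≤ B}

/-- The canonical injection `ι : R → R^bin`. -/
noncomputable def iotaBin (R : Type*) [CommRing R] [IsDomain R] [CharZero R] :
    R →+* binClosure R :=
  (algebraMap R (Localization (intNonzero R))).codRestrict (binClosure R)
    (fun r => Subring.mem_sInf.mpr fun _ hB => hB.2 ⟨r, rfl⟩)

/-- A binomial ring: an integral domain of characteristic zero in which each
`x (x-1) ⋯ (x-n+1)` is divisible by `n!`. (The domain and characteristic-zero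
assumptions are carried as instance hypotheses where used.) -/
def IsBinomialRing (S : Type*) [CommRing S] : Prop :=
  ∀ (x : S) (n : ℕ), ∃ y : S, (n.factorial : S) * y = ∏ i ∈ Finset.range n, (x - (i : S))

section

variable {L S : Type*} [CommRing L] [CommRing S]

theorem natCast_factorial_mul_binom {n : ℕ} (hn : IsUnit (n.factorial : L)) (x : L) :
    (n.factorial : L) * binom x n = ∏ i ∈ Finset.range n, (x - i) := by
  rw [binom, mul_left_comm, Ring.mul_inverse_cancel _ hn, mul_one]

theorem RingHom.eq_of_apply_natCast_mul_eq [IsDomain S] [CharZero S] {A : Type*} [Semiring A]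
    {ψ₁ ψ₂ : A →+* S} {n : ℕ} (hn : n ≠ 0) {y : A} (h : ψ₁ (n * y) = ψ₂ (n * y)) :
    ψ₁ y = ψ₂ y := by
  rw [map_mul, map_mul, map_natCast, map_natCast] at h
  exact mul_left_cancel₀ (Nat.cast_ne_zero.mpr hn) h

theorem BinClosed.map_eqLocus [IsDomain S] [CharZero S] {B : Subring L} (hB : BinClosed B)
    (hL : ∀ n : ℕ, IsUnit (n.factorial : L)) (ψ₁ ψ₂ : B →+* S) :
    BinClosed ((ψ₁.eqLocus ψ₂).map B.subtype) := by
  rintro _ ⟨x, hx, rfl⟩ n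
  refine ⟨⟨binom x n, hB x x.2 n⟩, ?_, rfl⟩
  have hprod :
      ((n.factorial : ℕ) : B) * ⟨binom x n, hB x x.2 n⟩ = ∏ i ∈ Finset.range n, (x - i) :=
    Subtype.ext (by push_cast; exact natCast_factorial_mul_binom (hL n) x)
  have hmem : ∏ i ∈ Finset.range n, (x - i) ∈ ψ₁.eqLocus ψ₂ :=
    prod_mem fun i _ => sub_mem hx (natCast_mem _ i)
  rw [← hprod] at hmem
  exact RingHom.eq_of_apply_natCast_mul_eq n.factorial_ne_zero hmem

end

theorem isUnit_natCast_localization_intNonzero (R : Type*) [CommRing R] [IsDomain R]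
    [CharZero R] {n : ℕ} (hn : n ≠ 0) : IsUnit (n : Localization (intNonzero R)) := by
  rw [← map_natCast (algebraMap R _)]
  exact IsLocalization.map_units _
    (⟨n, ⟨n, Int.cast_natCast n⟩, Nat.cast_ne_zero.mpr hn⟩ : intNonzero R)

section

variable (R : Type*) [CommRing R] [IsDomain R] [CharZero R]

theorem binClosure_binClosed : BinClosed (binClosure R) :=
  fun x hx n => Subring.mem_sInf.mpr fun B hB => hB.1 x (Subring.mem_sInf.mp hx B hB) n

variable {R} in
theorem binClosure_le {B : Subring (Localization (intNonzero R))} (hB : BinClosed B)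
    (hR : (algebraMap R (Localization (intNonzero R))).range ≤ B) : binClosure R ≤ B :=
  sInf_le ⟨hB, hR⟩

end

theorem binClosure_hom_extension_unique_general (R S : Type*) [CommRing R] [IsDomain R] [CharZero R]
    [CommRing S] [IsDomain S] [CharZero S] (φ : R →+* S)
    (ψ₁ ψ₂ : binClosure R →+* S)
    (h₁ : ψ₁.comp (iotaBin R) = φ) (h₂ : ψ₂.comp (iotaBin R) = φ) :
    ψ₁ = ψ₂ := by
  have hι : ∀ r, iotaBin R r ∈ ψ₁.eqLocus ψ₂ := DFunLike.congr_fun (h₁.trans h₂.symm)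
  have hle : binClosure R ≤ (ψ₁.eqLocus ψ₂).map (binClosure R).subtype :=
    binClosure_le
      ((binClosure_binClosed R).map_eqLocus
        (fun n => isUnit_natCast_localization_intNonzero R n.factorial_ne_zero) ψ₁ ψ₂)
      (by rintro _ ⟨r, rfl⟩; exact ⟨iotaBin R r, hι r, rfl⟩)
  ext a
  obtain ⟨b, hb, hba⟩ := hle a.2
  rwa [← Subtype.ext hba]

/-- the extension of `φ : R → S` to the binomial closure `R^bin` is unique:
any two ring homomorphisms `ψ₁, ψ₂ : R^bin → S` with `ψ₁ ∘ ι = φ = ψ₂ ∘ ι` coincide. -/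
theorem binClosure_hom_extension_unique (R S : Type*) [CommRing R] [IsDomain R] [CharZero R]
    [CommRing S] [IsDomain S] [CharZero S] (hS : IsBinomialRing S) (φ : R →+* S)
    (ψ₁ ψ₂ : binClosure R →+* S)
    (h₁ : ψ₁.comp (iotaBin R) = φ) (h₂ : ψ₂.comp (iotaBin R) = φ) :
    ψ₁ = ψ₂ :=
  binClosure_hom_extension_unique_general R S φ ψ₁ ψ₂ h₁ h₂
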